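/- Define φ : [0,1] → [0,1] as follows: φ(0) = 0; for each n ≥ 1, divide I_n = [2^{−n}, 2^{−n+1}] into 2n+1 subintervals I_n^1, …, I_n^{2n+1} of equal length (ordered left to right), and let φ restricted to I_n^k be the increasing affine bijection of I_n^k onto I_n when k is odd and the decreasing affine bijection of I_n^k onto I_n when k is even. Then the topological entropy of φ is infinite, while both the lower and upper metric mean dimension of ([0,1], |·|, φ) equal 0. -/

import Mathlib

/-!
On `I_m = [2⁻ᵐ, 2⁻ᵐ⁺¹]` the Hazard map has `2m + 1` affine branches of slope `2m + 1`, each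
onto `I_m`. Shaving a margin off each of the `2m - 1` inner branches leaves sub-intervals that
are mapped onto one common middle interval and lie a fixed distance apart: a horseshoe with
`2m - 1` symbols, so `sep(φ, ε) ≥ log (2m - 1)` for all small `ε`. As `m` is arbitrary, the
entropy is infinite.

Conversely, fix `ε` and `M ≈ log₂ (1/ε)`. The interval `[0, 2⁻ᴹ]` is invariant and has
diameter at most `ε`, so it holds at most one point of a separated set, while the invariant tail
`[2⁻ᴹ, 1]` is a union of the blocks `I_1, …, I_M`, on which `φ` is `(2M + 1)`-Lipschitz. So
`sep(n, φ, ε) ≤ 2 + (2M + 1)ⁿ / ε`, whence `sep(φ, ε) ≤ log (2M + 1) = O(log |log ε|)`, which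
is `o(|log ε|)`.
-/

open Filter Set Topology

noncomputable section

/-- `sep(n,φ,ε)`: the maximal cardinality of an `(n,φ,ε)`-separated set with respect to
the metric `d`, where a set `A` is `(n,φ,ε)`-separated if for all distinct `x, y ∈ A`
one has `max_{0 ≤ i < n} d(φ^i x, φ^i y) > ε`. -/
def sepNum {X : Type*} (d : X → X → ℝ) (φ : X → X) (n : ℕ) (ε : ℝ) : ℕ :=
  sSup {m : ℕ | ∃ A : Finset X,
    (∀ x ∈ A, ∀ y ∈ A, x ≠ y → ∃ i < n, ε < d (φ^[i] x) (φ^[i] y)) ∧ A.card = m}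

/-- `sep(φ,ε) = limsup_{n→∞} (1/n) log sep(n,φ,ε)`. -/
def sepExp {X : Type*} (d : X → X → ℝ) (φ : X → X) (ε : ℝ) : ℝ :=
  Filter.limsup (fun n : ℕ => Real.log (sepNum d φ n ε) / n) Filter.atTop

/-- The lower metric mean dimension: `liminf_{ε→0⁺} sep(φ,ε)/|log ε|`. -/
def mdimLower {X : Type*} (d : X → X → ℝ) (φ : X → X) : ℝ :=
  Filter.liminf (fun ε : ℝ => sepExp d φ ε / |Real.log ε|) (nhdsWithin 0 (Set.Ioi 0))

/-- The upper metric mean dimension: `limsup_{ε→0⁺} sep(φ,ε)/|log ε|`. -/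
def mdimUpper {X : Type*} (d : X → X → ℝ) (φ : X → X) : ℝ :=
  Filter.limsup (fun ε : ℝ => sepExp d φ ε / |Real.log ε|) (nhdsWithin 0 (Set.Ioi 0))

/-- The metric `d(x,y) = |x - y|` on `[0,1]`. -/
def dI : unitInterval → unitInterval → ℝ := fun x y => |(x : ℝ) - (y : ℝ)|

/-- The left endpoint of the `k`-th (0-indexed) of the `2n+1` equal subintervals of
`I_n = [2^{-n}, 2^{-n+1}]`. -/
def hazardEndpoint (n k : ℕ) : ℝ :=
  (2 : ℝ) ^ (-(n : ℤ)) + (k : ℝ) * ((2 : ℝ) ^ (-(n : ℤ)) / (2 * (n : ℝ) + 1))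

/-- `φ` is the Hazard map: `φ(0) = 0`, and on the `k`-th (0-indexed) of the `2n+1` equal
subintervals of `I_n = [2^{-n}, 2^{-n+1}]` it is the increasing (for `k` even, i.e. odd in
1-indexed counting) resp. decreasing (for `k` odd) affine bijection onto `I_n`. -/
def IsHazardMap (φ : unitInterval → unitInterval) : Prop :=
  (∀ x : unitInterval, (x : ℝ) = 0 → (φ x : ℝ) = 0) ∧
  ∀ n : ℕ, 1 ≤ n → ∀ k : ℕ, k < 2 * n + 1 → ∀ x : unitInterval,
    (x : ℝ) ∈ Set.Icc (hazardEndpoint n k) (hazardEndpoint n (k + 1)) →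
    (φ x : ℝ) =
      if k % 2 = 0 then
        (2 * (n : ℝ) + 1) * ((x : ℝ) - hazardEndpoint n k) + (2 : ℝ) ^ (-(n : ℤ))
      else
        (2 : ℝ) ^ (-(n : ℤ) + 1) - (2 * (n : ℝ) + 1) * ((x : ℝ) - hazardEndpoint n k)

open Real
open scoped NNReal

section SeparatedSets

variable {X : Type*} (d : X → X → ℝ) (φ : X → X)

def IsSeparated (n : ℕ) (ε : ℝ) (A : Finset X) : Prop :=
  ∀ x ∈ A, ∀ y ∈ A, x ≠ y → ∃ i < n, ε < d (φ^[i] x) (φ^[i] y)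

lemma sepNum_eq_sSup (n : ℕ) (ε : ℝ) :
    sepNum d φ n ε = sSup {m | ∃ A, IsSeparated d φ n ε A ∧ A.card = m} :=
  rfl

variable {d φ} {n : ℕ} {ε B : ℝ}

lemma bddAbove_card_isSeparated (hB : ∀ A, IsSeparated d φ n ε A → (A.card : ℝ) ≤ B) :
    BddAbove {m | ∃ A, IsSeparated d φ n ε A ∧ A.card = m} :=
  ⟨⌈B⌉₊, by rintro _ ⟨A, hA, rfl⟩; exact_mod_cast (hB A hA).trans (Nat.le_ceil B)⟩

lemma sepNum_le (hB : ∀ A, IsSeparated d φ n ε A → (A.card : ℝ) ≤ B) :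
    (sepNum d φ n ε : ℝ) ≤ B := by
  obtain ⟨A, hA, hcard⟩ :=
    Nat.sSup_mem (by exact ⟨0, ∅, by simp [IsSeparated]⟩) (bddAbove_card_isSeparated hB)
  rw [sepNum_eq_sSup, ← hcard]
  exact hB A hA

lemma card_le_sepNum (hB : ∀ A, IsSeparated d φ n ε A → (A.card : ℝ) ≤ B) {A : Finset X}
    (hA : IsSeparated d φ n ε A) : A.card ≤ sepNum d φ n ε :=
  le_csSup (bddAbove_card_isSeparated hB) ⟨A, hA, rfl⟩

end SeparatedSets

section Exponent

variable {X : Type*} {d : X → X → ℝ} {φ : X → X} {ε C K : ℝ}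

lemma log_sepNum_div_nonneg (n : ℕ) : 0 ≤ log (sepNum d φ n ε) / n :=
  div_nonneg (log_natCast_nonneg _) n.cast_nonneg

lemma tendsto_const_div_add_const (a b : ℝ) :
    Tendsto (fun n : ℕ => a / n + b) atTop (𝓝 b) := by
  simpa using (tendsto_const_div_atTop_nhds_zero_nat a).add_const b

variable (hC : 1 ≤ C) (hK : 1 ≤ K) (h : ∀ n, (sepNum d φ n ε : ℝ) ≤ C * K ^ n)
include hC hK h

lemma log_sepNum_div_le (n : ℕ) : log (sepNum d φ n ε) / n ≤ log C / n + log K := by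
  rcases n.eq_zero_or_pos with rfl | hn
  · simpa using log_nonneg hK
  have hlog : log (sepNum d φ n ε) ≤ log C + n * log K := by
    rw [← log_pow, ← log_mul (by positivity) (by positivity)]
    rcases (sepNum d φ n ε).eq_zero_or_pos with h0 | hpos
    · simpa [h0] using log_nonneg (one_le_mul_of_one_le_of_one_le hC (one_le_pow₀ hK))
    · exact log_le_log (by exact_mod_cast hpos) (h n)
  calc log (sepNum d φ n ε) / n ≤ (log C + n * log K) / n := by gcongr
    _ = log C / n + log K := by field_simp

lemma isBoundedUnder_log_sepNum_div :
    IsBoundedUnder (· ≤ ·) atTop fun n : ℕ => log (sepNum d φ n ε) / n :=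
  (tendsto_const_div_add_const (log C) (log K)).isBoundedUnder_le.mono_le
    (Eventually.of_forall (log_sepNum_div_le hC hK h))

lemma sepExp_le_log : sepExp d φ ε ≤ log K :=
  calc sepExp d φ ε ≤ limsup (fun n : ℕ => log C / n + log K) atTop :=
        limsup_le_limsup (Eventually.of_forall (log_sepNum_div_le hC hK h))
          (isCoboundedUnder_le_of_le atTop log_sepNum_div_nonneg)
          (tendsto_const_div_add_const (log C) (log K)).isBoundedUnder_le
    _ = log K := (tendsto_const_div_add_const (log C) (log K)).limsup_eq

lemma sepExp_nonneg : 0 ≤ sepExp d φ ε :=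
  le_limsup_of_frequently_le (Frequently.of_forall log_sepNum_div_nonneg)
    (isBoundedUnder_log_sepNum_div hC hK h)

lemma log_le_sepExp {s : ℕ} (hs : 0 < s) (hsep : ∀ n, s ^ n ≤ sepNum d φ n ε) :
    log s ≤ sepExp d φ ε := by
  refine le_limsup_of_frequently_le ?_ (isBoundedUnder_log_sepNum_div hC hK h)
  refine (eventually_ge_atTop 1).frequently.mono fun n hn => ?_
  rw [le_div_iff₀ (by exact_mod_cast hn), mul_comm, ← log_pow]
  exact log_le_log (by positivity) (by exact_mod_cast hsep n)

end Exponent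

section Horseshoe

variable {X ι : Type*} {φ : X → X} {J : Set X} {K : ι → Set X}

lemma exists_itinerary (hJ : J.Nonempty) (hcover : ∀ j, SurjOn φ (J ∩ K j) J) :
    ∀ {n : ℕ} (w : Fin n → ι), ∃ x ∈ J, ∀ i : Fin n, φ^[i] x ∈ K (w i)
  | 0, _ => hJ.imp fun _ hx => ⟨hx, fun i => i.elim0⟩
  | n + 1, w => by
    obtain ⟨y, hyJ, hy⟩ := exists_itinerary hJ hcover (Fin.tail w)
    obtain ⟨x, ⟨hxJ, hxK⟩, rfl⟩ := hcover (w 0) hyJ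
    exact ⟨x, hxJ, Fin.cases hxK fun i => by simpa [Fin.tail] using hy i⟩

lemma card_pow_le_sepNum [PseudoMetricSpace X] [Fintype ι] {n : ℕ} {ε B : ℝ} (hε : 0 ≤ ε)
    (hB : ∀ A, IsSeparated dist φ n ε A → (A.card : ℝ) ≤ B)
    (hJ : J.Nonempty) (hcover : ∀ j, SurjOn φ (J ∩ K j) J)
    (hapart : Pairwise fun j j' => ∀ x ∈ K j, ∀ y ∈ K j', ε < dist x y) :
    Fintype.card ι ^ n ≤ sepNum dist φ n ε := by
  classical
  choose x _ hx using fun w : Fin n → ι => exists_itinerary hJ hcover w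
  have hsep : ∀ w w', w ≠ w' → ∃ i < n, ε < dist (φ^[i] (x w)) (φ^[i] (x w')) := by
    intro w w' hne
    obtain ⟨i, hi⟩ := Function.ne_iff.1 hne
    exact ⟨i, i.2, hapart hi _ (hx w i) _ (hx w' i)⟩
  have hinj : Function.Injective x := fun w w' hxw => by
    by_contra hne
    obtain ⟨i, -, hi⟩ := hsep w w' hne
    rw [hxw, dist_self] at hi
    exact hi.not_ge hε
  calc Fintype.card ι ^ n = (Finset.univ.image x).card := by
        rw [Finset.card_image_of_injective _ hinj, Finset.card_univ, Fintype.card_fun,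
          Fintype.card_fin]
    _ ≤ sepNum dist φ n ε := by
        refine card_le_sepNum hB ?_
        simp only [IsSeparated, Finset.mem_image, Finset.mem_univ, true_and]
        rintro _ ⟨w, rfl⟩ _ ⟨w', rfl⟩ hne
        exact hsep w w' (ne_of_apply_ne x hne)

end Horseshoe

lemma LipschitzOnWith.Icc_union {β : Type*} [PseudoMetricSpace β] {f : ℝ → β} {K : ℝ≥0}
    {a b c : ℝ} (h₁ : LipschitzOnWith K f (Icc a b)) (h₂ : LipschitzOnWith K f (Icc b c)) :
    LipschitzOnWith K f (Icc a c) := by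
  refine LipschitzOnWith.of_dist_le_mul fun x hx y hy => ?_
  wlog hxy : x ≤ y generalizing x y
  · rw [dist_comm, dist_comm x]
    exact this y hy x hx (le_of_not_ge hxy)
  rcases le_total y b with hyb | hby
  · exact h₁.dist_le_mul x ⟨hx.1, hxy.trans hyb⟩ y ⟨hx.1.trans hxy, hyb⟩
  rcases le_total x b with hxb | hbx
  · have hsplit : dist x b + dist b y = dist x y := by
      simp only [Real.dist_eq, abs_of_nonpos (sub_nonpos.2 hxb), abs_of_nonpos (sub_nonpos.2 hby),
        abs_of_nonpos (sub_nonpos.2 hxy)]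
      ring
    calc dist (f x) (f y) ≤ dist (f x) (f b) + dist (f b) (f y) := dist_triangle _ _ _
      _ ≤ K * dist x b + K * dist b y :=
          add_le_add (h₁.dist_le_mul x ⟨hx.1, hxb⟩ b ⟨hx.1.trans hxb, le_rfl⟩)
            (h₂.dist_le_mul b ⟨le_rfl, hby.trans hy.2⟩ y ⟨hby, hy.2⟩)
      _ = K * dist x y := by rw [← hsplit, mul_add]
  · exact h₂.dist_le_mul x ⟨hbx, hxy.trans hy.2⟩ y ⟨hbx.trans hxy, hy.2⟩

lemma LipschitzOnWith.iterate {α : Type*} [PseudoEMetricSpace α] {f : α → α} {s : Set α}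
    {K : ℝ≥0} (hf : LipschitzOnWith K f s) (hs : MapsTo f s s) :
    ∀ n, LipschitzOnWith (K ^ n) f^[n] s
  | 0 => by simpa using LipschitzWith.id.lipschitzOnWith
  | n + 1 => by
    rw [Function.iterate_succ, pow_succ]
    exact (hf.iterate hs n).comp hf hs

lemma card_le_floor_of_forall_lt_abs_sub {ι : Type*} {A : Finset ι} {g : ι → ℝ} {a b r : ℝ}
    (hr : 0 < r) (hg : ∀ x ∈ A, g x ∈ Icc a b)
    (hsep : ∀ x ∈ A, ∀ y ∈ A, x ≠ y → r < |g x - g y|) :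
    A.card ≤ ⌊(b - a) / r⌋₊ + 1 := by
  set bin : ι → ℕ := fun x => ⌊(g x - a) / r⌋₊
  have hmaps : MapsTo bin A (Finset.range (⌊(b - a) / r⌋₊ + 1)) := fun x hx =>
    Finset.mem_range_succ_iff.2 (Nat.floor_le_floor (by gcongr; exact (hg x hx).2))
  have hinj : InjOn bin A := by
    intro x hx y hy hxy
    by_contra hne
    have hx0 : 0 ≤ (g x - a) / r := div_nonneg (sub_nonneg.2 (hg x hx).1) hr.le
    have hy0 : 0 ≤ (g y - a) / r := div_nonneg (sub_nonneg.2 (hg y hy).1) hr.le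
    have hbin : (bin x : ℝ) = bin y := congrArg Nat.cast hxy
    have hclose : |(g x - a) / r - (g y - a) / r| < 1 := by
      rw [abs_sub_lt_iff]
      constructor <;> linarith [Nat.floor_le hx0, Nat.lt_floor_add_one ((g x - a) / r),
        Nat.floor_le hy0, Nat.lt_floor_add_one ((g y - a) / r)]
    rw [← sub_div, sub_sub_sub_cancel_right, abs_div, abs_of_pos hr, div_lt_one hr] at hclose
    exact (hsep x hx y hy hne).not_gt hclose
  simpa using Finset.card_le_card_of_injOn bin hmaps hinj

lemma tendsto_log_mul_add_div_atTop {a : ℝ} (ha : 0 < a) (b : ℝ) :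
    Tendsto (fun t => log (a * t + b) / t) atTop (𝓝 0) := by
  have hlin : Tendsto (fun t => a * t + b) atTop atTop :=
    tendsto_atTop_add_const_right _ b (tendsto_id.const_mul_atTop ha)
  refine ((tendsto_pow_log_div_mul_add_atTop a⁻¹ (-(b / a)) 1 (inv_ne_zero ha.ne')).comp
    hlin).congr fun t => ?_
  simp only [Function.comp_apply, pow_one]
  congr 1
  field_simp
  ring

section IntervalMaps

variable {φ : unitInterval → unitInterval}

def liftReal (φ : unitInterval → unitInterval) : ℝ → ℝ :=
  IccExtend zero_le_one fun x => (φ x : ℝ)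

lemma liftReal_coe (x : unitInterval) : liftReal φ x = φ x :=
  IccExtend_val _ _ x

lemma coe_iterate (i : ℕ) (x : unitInterval) :
    ((φ^[i] x : unitInterval) : ℝ) = (liftReal φ)^[i] x :=
  Function.Semiconj.iterate_right (f := Subtype.val) (fun x => (liftReal_coe x).symm) i x

lemma dI_iterate (i : ℕ) (x y : unitInterval) :
    dI (φ^[i] x) (φ^[i] y) = dist ((liftReal φ)^[i] x) ((liftReal φ)^[i] y) := by
  rw [dI, coe_iterate, coe_iterate, Real.dist_eq]

variable {n : ℕ} {c ε : ℝ} {A : Finset unitInterval}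

lemma IsSeparated.card_filter_le_le_one (hcε : c ≤ ε)
    (hhead : MapsTo (liftReal φ) (Icc 0 c) (Icc 0 c)) (hA : IsSeparated dI φ n ε A) :
    (A.filter fun x : unitInterval => (x : ℝ) ≤ c).card ≤ 1 := by
  refine Finset.card_le_one.2 fun x hx y hy => by_contra fun hne => ?_
  rw [Finset.mem_filter] at hx hy
  obtain ⟨i, -, hi⟩ := hA x hx.1 y hy.1 hne
  have hxi := hhead.iterate i ⟨x.2.1, hx.2⟩
  have hyi := hhead.iterate i ⟨y.2.1, hy.2⟩
  rw [dI_iterate, Real.dist_eq] at hi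
  linarith [abs_sub_le_of_nonneg_of_le hxi.1 hxi.2 hyi.1 hyi.2]

lemma IsSeparated.card_filter_not_le_le {K : ℝ≥0} (hε : 0 < ε) (hK : 1 ≤ K)
    (htail : MapsTo (liftReal φ) (Icc c 1) (Icc c 1))
    (hlip : LipschitzOnWith K (liftReal φ) (Icc c 1)) (hA : IsSeparated dI φ n ε A) :
    (A.filter fun x : unitInterval => ¬(x : ℝ) ≤ c).card ≤ ⌊K ^ n / ε⌋₊ + 1 := by
  have := card_le_floor_of_forall_lt_abs_sub (A := A.filter fun x : unitInterval => ¬(x : ℝ) ≤ c)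
    (g := Subtype.val) (a := 0) (b := 1) (r := ε / K ^ n) (by positivity) (fun x _ => x.2) ?_
  · simpa [one_div_div] using this
  intro x hx y hy hne
  rw [Finset.mem_filter, not_le] at hx hy
  obtain ⟨i, hi, hsep⟩ := hA x hx.1 y hy.1 hne
  rw [div_lt_iff₀ (by positivity), ← Real.dist_eq]
  calc ε < dist ((liftReal φ)^[i] x) ((liftReal φ)^[i] y) := dI_iterate i x y ▸ hsep
    _ ≤ (K : ℝ) ^ i * dist (x : ℝ) y := by
        exact_mod_cast (hlip.iterate htail i).dist_le_mul x ⟨hx.2.le, x.2.2⟩ y ⟨hy.2.le, y.2.2⟩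
    _ ≤ (K : ℝ) ^ n * dist (x : ℝ) y := by gcongr
    _ = dist (x : ℝ) y * K ^ n := mul_comm _ _

lemma IsSeparated.card_le_two_add {K : ℝ≥0} (hε : 0 < ε) (hcε : c ≤ ε) (hK : 1 ≤ K)
    (hhead : MapsTo (liftReal φ) (Icc 0 c) (Icc 0 c))
    (htail : MapsTo (liftReal φ) (Icc c 1) (Icc c 1))
    (hlip : LipschitzOnWith K (liftReal φ) (Icc c 1)) (hA : IsSeparated dI φ n ε A) :
    (A.card : ℝ) ≤ 2 + K ^ n / ε := by
  classical
  have hcard : A.card ≤ 1 + (⌊K ^ n / ε⌋₊ + 1) := by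
    have := Finset.card_filter_add_card_filter_not (s := A) fun x : unitInterval => (x : ℝ) ≤ c
    have := hA.card_filter_le_le_one hcε hhead
    have := hA.card_filter_not_le_le hε hK htail hlip
    omega
  calc (A.card : ℝ) ≤ 1 + (⌊K ^ n / ε⌋₊ + 1) := by exact_mod_cast hcard
    _ ≤ 2 + K ^ n / ε := by linarith [Nat.floor_le (by positivity : (0 : ℝ) ≤ K ^ n / ε)]

end IntervalMaps

section HazardGeometry

def hazardBase (n : ℕ) : ℝ := 2 ^ (-(n : ℤ))

def hazardWidth (n : ℕ) : ℝ := hazardBase n / (2 * n + 1)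

def hazardBlock (n : ℕ) : Set ℝ := Icc (hazardBase n) (2 * hazardBase n)

def hazardBranch (n k : ℕ) : Set ℝ := Icc (hazardEndpoint n k) (hazardEndpoint n (k + 1))

def hazardMiddle (n : ℕ) : Set ℝ := Icc (hazardEndpoint n 1) (hazardEndpoint n (2 * n))

/-- The part of the `k`-th branch that the branch maps onto `hazardMiddle n`. -/
def hazardCore (n k : ℕ) : Set ℝ :=
  Icc (hazardEndpoint n k + hazardWidth n / (2 * n + 1))
    (hazardEndpoint n (k + 1) - hazardWidth n / (2 * n + 1))

lemma hazardEndpoint_eq (n k : ℕ) : hazardEndpoint n k = hazardBase n + k * hazardWidth n :=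
  rfl

lemma hazardBase_pos (n : ℕ) : 0 < hazardBase n := zpow_pos two_pos _

lemma hazardBase_zero : hazardBase 0 = 1 := by simp [hazardBase]

lemma two_mul_hazardBase_succ (n : ℕ) : 2 * hazardBase (n + 1) = hazardBase n := by
  rw [hazardBase, hazardBase, Nat.cast_succ, neg_add, zpow_add₀ two_ne_zero]
  norm_num
  ring

lemma hazardBase_eq_exp (n : ℕ) : hazardBase n = exp (-(n * log 2)) := by
  rw [hazardBase, zpow_neg, zpow_natCast, ← rpow_natCast, rpow_def_of_pos two_pos, exp_neg,
    mul_comm]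

lemma hazardBase_antitone : Antitone hazardBase := fun m n h => by
  simp only [hazardBase_eq_exp]
  gcongr

lemma hazardBase_le_one (n : ℕ) : hazardBase n ≤ 1 :=
  hazardBase_zero ▸ hazardBase_antitone n.zero_le

lemma exists_hazardBase_lt {x : ℝ} (hx : 0 < x) : ∃ n, hazardBase n < x := by
  obtain ⟨n, hn⟩ := exists_pow_lt_of_lt_one hx (by norm_num : (2 : ℝ)⁻¹ < 1)
  exact ⟨n, by rwa [hazardBase, zpow_neg, zpow_natCast, ← inv_pow]⟩

lemma hazardWidth_pos (n : ℕ) : 0 < hazardWidth n :=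
  div_pos (hazardBase_pos n) (by positivity)

lemma slope_mul_hazardWidth (n : ℕ) : (2 * n + 1) * hazardWidth n = hazardBase n :=
  mul_div_cancel₀ _ (by positivity)

lemma hazardEndpoint_mono (n : ℕ) : Monotone (hazardEndpoint n) := fun k l h => by
  have := hazardWidth_pos n
  simp only [hazardEndpoint_eq]
  gcongr

lemma hazardEndpoint_zero (n : ℕ) : hazardEndpoint n 0 = hazardBase n := by
  simp [hazardEndpoint_eq]

lemma hazardEndpoint_succ (n k : ℕ) :
    hazardEndpoint n (k + 1) = hazardEndpoint n k + hazardWidth n := by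
  simp only [hazardEndpoint_eq]
  push_cast
  ring

lemma hazardEndpoint_two_mul_add_one (n : ℕ) :
    hazardEndpoint n (2 * n + 1) = 2 * hazardBase n := by
  rw [hazardEndpoint_eq, ← slope_mul_hazardWidth]
  push_cast
  ring

lemma hazardBlock_eq (n : ℕ) :
    hazardBlock n = Icc (hazardEndpoint n 0) (hazardEndpoint n (2 * n + 1)) := by
  rw [hazardBlock, hazardEndpoint_zero, hazardEndpoint_two_mul_add_one]

lemma hazardBlock_succ (n : ℕ) :
    hazardBlock (n + 1) = Icc (hazardBase (n + 1)) (hazardBase n) := by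
  rw [hazardBlock, two_mul_hazardBase_succ]

lemma hazardBlock_subset_Icc (n : ℕ) : hazardBlock (n + 1) ⊆ Icc 0 (hazardBase n) :=
  (hazardBlock_succ n).symm ▸ Icc_subset_Icc (hazardBase_pos _).le le_rfl

lemma hazardBranch_subset_hazardBlock {n k : ℕ} (hk : k < 2 * n + 1) :
    hazardBranch n k ⊆ hazardBlock n :=
  (hazardBlock_eq n).symm ▸
    Icc_subset_Icc (hazardEndpoint_mono n k.zero_le) (hazardEndpoint_mono n hk)

lemma hazardBlock_subset_unitInterval {n : ℕ} (hn : 1 ≤ n) : hazardBlock n ⊆ unitInterval := by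
  obtain ⟨m, rfl⟩ := Nat.exists_eq_add_of_le' hn
  exact (hazardBlock_subset_Icc m).trans (Icc_subset_Icc_right (hazardBase_le_one m))

/-- `m > n` is possible even for `x = 2⁻ⁿ`, the right endpoint of `I_{n+1}`. -/
lemma exists_mem_hazardBlock {x : ℝ} {n : ℕ} (hx : x ∈ Ioc 0 (hazardBase n)) :
    ∃ m, n < m ∧ x ∈ hazardBlock m := by
  classical
  have hex := exists_hazardBase_lt hx.1
  set m := Nat.find hex
  have hm : hazardBase m < x := Nat.find_spec hex
  have hnm : n < m := lt_of_not_ge fun h => (hm.trans_le hx.2).not_ge (hazardBase_antitone h)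
  obtain ⟨l, hl⟩ := Nat.exists_eq_add_of_lt hnm
  refine ⟨m, hnm, hm.le, ?_⟩
  rw [show m = (n + l) + 1 by omega, two_mul_hazardBase_succ]
  exact not_lt.1 (Nat.find_min hex (show n + l < m by omega))

lemma hazardCore_subset_hazardBranch (n k : ℕ) : hazardCore n k ⊆ hazardBranch n k := by
  have : 0 ≤ hazardWidth n / (2 * n + 1) := by have := hazardWidth_pos n; positivity
  exact Icc_subset_Icc (by linarith) (by linarith)

lemma hazardCore_subset_hazardMiddle {n k : ℕ} (hk0 : 0 < k) (hk : k < 2 * n) :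
    hazardCore n k ⊆ hazardMiddle n :=
  (hazardCore_subset_hazardBranch n k).trans
    (Icc_subset_Icc (hazardEndpoint_mono n hk0) (hazardEndpoint_mono n hk))

lemma hazardMiddle_subset_hazardBlock (n : ℕ) : hazardMiddle n ⊆ hazardBlock n :=
  (hazardBlock_eq n).symm ▸
    Icc_subset_Icc (hazardEndpoint_mono n zero_le_one) (hazardEndpoint_mono n (by omega))

lemma add_div_mem_hazardCore {n : ℕ} (k : ℕ) {t : ℝ}
    (ht : t ∈ Icc (hazardWidth n) (2 * n * hazardWidth n)) :
    hazardEndpoint n k + t / (2 * n + 1) ∈ hazardCore n k := by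
  have hL : (0 : ℝ) < 2 * n + 1 := by positivity
  refine ⟨by gcongr; exact ht.1, ?_⟩
  rw [hazardEndpoint_succ, add_sub_assoc, add_le_add_iff_left, le_sub_iff_add_le, ← add_div,
    div_le_iff₀ hL]
  linarith [ht.2]

lemma hazardCore_apart {n k k' : ℕ} (hkk' : k ≠ k') {x y : ℝ} (hx : x ∈ hazardCore n k)
    (hy : y ∈ hazardCore n k') : 2 * (hazardWidth n / (2 * n + 1)) ≤ |x - y| := by
  wlog hlt : k < k' generalizing k k' x y
  · rw [abs_sub_comm]
    exact this hkk'.symm hy hx (lt_of_le_of_ne (not_lt.1 hlt) hkk'.symm)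
  have := hazardEndpoint_mono n (show k + 1 ≤ k' from hlt)
  have : 0 < hazardWidth n / (2 * n + 1) := by have := hazardWidth_pos n; positivity
  rw [abs_sub_comm, abs_of_nonneg] <;> linarith [hx.2, hy.1]

def hazardDepth (ε : ℝ) : ℕ := ⌈-log ε / log 2⌉₊ + 1

lemma hazardBase_hazardDepth_le {ε : ℝ} (hε : 0 < ε) : hazardBase (hazardDepth ε) ≤ ε := by
  have hM : -log ε / log 2 ≤ hazardDepth ε :=
    (Nat.le_ceil _).trans (by exact_mod_cast Nat.le_succ _)
  rw [div_le_iff₀ (log_pos one_lt_two), neg_le] at hM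
  rw [hazardBase_eq_exp]
  calc exp (-(hazardDepth ε * log 2)) ≤ exp (log ε) := exp_le_exp.2 hM
    _ = ε := exp_log hε

lemma hazardDepth_le {ε : ℝ} (hε : 0 < ε) (hε1 : ε ≤ 1) :
    (hazardDepth ε : ℝ) ≤ -log ε / log 2 + 2 := by
  have hx : 0 ≤ -log ε / log 2 :=
    div_nonneg (neg_nonneg.2 (log_nonpos hε.le hε1)) (log_pos one_lt_two).le
  rw [hazardDepth]
  push_cast
  linarith [Nat.ceil_lt_add_one hx]

end HazardGeometry

namespace IsHazardMap

variable {φ : unitInterval → unitInterval} (hφ : IsHazardMap φ)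
include hφ

lemma liftReal_zero : liftReal φ 0 = 0 :=
  (liftReal_coe (0 : unitInterval)).trans (hφ.1 0 rfl)

lemma liftReal_eq {n k : ℕ} (hn : 1 ≤ n) (hk : k < 2 * n + 1) {x : ℝ}
    (hx : x ∈ hazardBranch n k) :
    liftReal φ x = if k % 2 = 0 then (2 * n + 1) * (x - hazardEndpoint n k) + hazardBase n
      else 2 * hazardBase n - (2 * n + 1) * (x - hazardEndpoint n k) := by
  have hx01 := hazardBlock_subset_unitInterval hn (hazardBranch_subset_hazardBlock hk hx)
  have htwo : (2 : ℝ) ^ (-(n : ℤ) + 1) = 2 * hazardBase n := by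
    rw [zpow_add_one₀ two_ne_zero, hazardBase, mul_comm]
  rw [show x = ((⟨x, hx01⟩ : unitInterval) : ℝ) from rfl, liftReal_coe,
    hφ.2 n hn k hk ⟨x, hx01⟩ hx, htwo, hazardBase]

lemma mapsTo_hazardBranch {n k : ℕ} (hn : 1 ≤ n) (hk : k < 2 * n + 1) :
    MapsTo (liftReal φ) (hazardBranch n k) (hazardBlock n) := fun x hx => by
  have h0 : 0 ≤ (2 * n + 1) * (x - hazardEndpoint n k) :=
    mul_nonneg (by positivity) (sub_nonneg.2 hx.1)
  have h1 : (2 * n + 1) * (x - hazardEndpoint n k) ≤ hazardBase n := by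
    rw [← slope_mul_hazardWidth]
    gcongr
    linarith [hx.2, hazardEndpoint_succ n k]
  rw [hazardBlock, mem_Icc, hφ.liftReal_eq hn hk hx]
  split_ifs <;> constructor <;> linarith

lemma lipschitzOnWith_hazardBranch {n k : ℕ} (hn : 1 ≤ n) (hk : k < 2 * n + 1) :
    LipschitzOnWith (2 * n + 1) (liftReal φ) (hazardBranch n k) := by
  refine LipschitzOnWith.of_dist_le_mul fun x hx y hy => le_of_eq ?_
  have hL : |(2 * n + 1 : ℝ)| = 2 * n + 1 := abs_of_pos (by positivity)
  rw [hφ.liftReal_eq hn hk hx, hφ.liftReal_eq hn hk hy, Real.dist_eq, Real.dist_eq]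
  push_cast
  split_ifs
  · rw [add_sub_add_right_eq_sub, ← mul_sub, sub_sub_sub_cancel_right, abs_mul, hL]
  · rw [sub_sub_sub_cancel_left, ← mul_sub, sub_sub_sub_cancel_right, abs_mul, hL, abs_sub_comm]

lemma mapsTo_hazardBlock {n : ℕ} (hn : 1 ≤ n) :
    MapsTo (liftReal φ) (hazardBlock n) (hazardBlock n) := by
  have key : ∀ k < 2 * n + 1,
      MapsTo (liftReal φ) (Icc (hazardEndpoint n 0) (hazardEndpoint n (k + 1)))
        (hazardBlock n) := by
    intro k hk
    induction k with
    | zero => exact hφ.mapsTo_hazardBranch hn hk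
    | succ k ih =>
      exact ((ih (by omega)).union (hφ.mapsTo_hazardBranch hn hk)).mono_left
        Icc_subset_Icc_union_Icc
  simpa [hazardBlock_eq] using key (2 * n) (by omega)

lemma lipschitzOnWith_hazardBlock {n : ℕ} (hn : 1 ≤ n) :
    LipschitzOnWith (2 * n + 1) (liftReal φ) (hazardBlock n) := by
  have key : ∀ k < 2 * n + 1, LipschitzOnWith (2 * n + 1) (liftReal φ)
      (Icc (hazardEndpoint n 0) (hazardEndpoint n (k + 1))) := by
    intro k hk
    induction k with
    | zero => exact hφ.lipschitzOnWith_hazardBranch hn hk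
    | succ k ih => exact (ih (by omega)).Icc_union (hφ.lipschitzOnWith_hazardBranch hn hk)
  simpa [hazardBlock_eq] using key (2 * n) (by omega)

lemma mapsTo_tail {M : ℕ} (hM : 1 ≤ M) :
    MapsTo (liftReal φ) (Icc (hazardBase M) 1) (Icc (hazardBase M) 1) := by
  induction M, hM using Nat.le_induction with
  | base => simpa [hazardBlock, two_mul_hazardBase_succ, hazardBase_zero] using
      hφ.mapsTo_hazardBlock le_rfl
  | succ M hM ih =>
    have hblock : hazardBlock (M + 1) ⊆ Icc (hazardBase (M + 1)) 1 :=
      hazardBlock_succ M ▸ Icc_subset_Icc_right (hazardBase_le_one M)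
    have htail : Icc (hazardBase M) 1 ⊆ Icc (hazardBase (M + 1)) 1 :=
      Icc_subset_Icc_left (hazardBase_antitone M.le_succ)
    refine (((hφ.mapsTo_hazardBlock (by omega)).mono_right hblock).union
      (ih.mono_right htail)).mono_left ?_
    rw [hazardBlock_succ]
    exact Icc_subset_Icc_union_Icc

lemma lipschitzOnWith_tail {M : ℕ} (hM : 1 ≤ M) :
    LipschitzOnWith (2 * M + 1) (liftReal φ) (Icc (hazardBase M) 1) := by
  induction M, hM using Nat.le_induction with
  | base => simpa [hazardBlock, two_mul_hazardBase_succ, hazardBase_zero] using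
      hφ.lipschitzOnWith_hazardBlock le_rfl
  | succ M hM ih =>
    have hblock := hφ.lipschitzOnWith_hazardBlock (n := M + 1) (by omega)
    rw [hazardBlock_succ] at hblock
    exact hblock.Icc_union (ih.weaken (by push_cast; gcongr; exact le_self_add))

lemma mapsTo_head (M : ℕ) :
    MapsTo (liftReal φ) (Icc 0 (hazardBase M)) (Icc 0 (hazardBase M)) := by
  intro x hx
  rcases hx.1.eq_or_lt with rfl | hx0
  · rw [hφ.liftReal_zero]
    exact ⟨le_rfl, (hazardBase_pos M).le⟩
  obtain ⟨m, hMm, hxm⟩ := exists_mem_hazardBlock ⟨hx0, hx.2⟩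
  obtain ⟨l, rfl⟩ := Nat.exists_eq_add_of_lt hMm
  have := hazardBlock_subset_Icc (M + l) (hφ.mapsTo_hazardBlock (by omega) hxm)
  exact ⟨this.1, this.2.trans (hazardBase_antitone le_self_add)⟩

lemma surjOn_hazardCore {n k : ℕ} (hn : 1 ≤ n) (hk : k < 2 * n + 1) :
    SurjOn (liftReal φ) (hazardCore n k) (hazardMiddle n) := by
  intro y hy
  have hbase := slope_mul_hazardWidth n
  have hy1 : hazardBase n + hazardWidth n ≤ y := by simpa [hazardEndpoint_eq] using hy.1
  have hy2 : y ≤ hazardBase n + 2 * n * hazardWidth n := by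
    simpa [hazardEndpoint_eq] using hy.2
  obtain ⟨t, ht, hty⟩ : ∃ t ∈ Icc (hazardWidth n) (2 * n * hazardWidth n),
      (if k % 2 = 0 then t + hazardBase n else 2 * hazardBase n - t) = y := by
    split_ifs
    · exact ⟨y - hazardBase n, ⟨by linarith, by linarith⟩, by ring⟩
    · exact ⟨2 * hazardBase n - y, ⟨by linarith, by linarith⟩, by ring⟩
  have hx := add_div_mem_hazardCore k ht
  refine ⟨_, hx, ?_⟩
  rw [hφ.liftReal_eq hn hk (hazardCore_subset_hazardBranch n k hx), add_sub_cancel_left,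
    mul_div_cancel₀ _ (by positivity)]
  exact hty

lemma card_le_of_isSeparated {n : ℕ} {ε : ℝ} (hε : 0 < ε) {A : Finset unitInterval}
    (hA : IsSeparated dI φ n ε A) : (A.card : ℝ) ≤ 2 + (2 * hazardDepth ε + 1) ^ n / ε := by
  have hM : 1 ≤ hazardDepth ε := Nat.le_add_left 1 _
  have := IsSeparated.card_le_two_add hε (hazardBase_hazardDepth_le hε) (by simp) (hφ.mapsTo_head _)
    (hφ.mapsTo_tail hM) (hφ.lipschitzOnWith_tail hM) hA
  exact_mod_cast this

lemma sepNum_le_mul_pow (n : ℕ) {ε : ℝ} (hε : 0 < ε) :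
    (sepNum dI φ n ε : ℝ) ≤ (2 + 1 / ε) * (2 * hazardDepth ε + 1) ^ n := by
  refine sepNum_le fun A hA => (hφ.card_le_of_isSeparated hε hA).trans ?_
  have : (1 : ℝ) ≤ (2 * hazardDepth ε + 1) ^ n := one_le_pow₀ (by simp)
  rw [add_mul, div_mul_eq_mul_div, one_mul]
  linarith

lemma pow_le_sepNum {m : ℕ} (hm : 1 ≤ m) {ε : ℝ} (hε : 0 < ε)
    (hεm : ε < 2 * (hazardWidth m / (2 * m + 1))) (n : ℕ) :
    (2 * m - 1) ^ n ≤ sepNum dI φ n ε := by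
  have hmid := hazardMiddle_subset_hazardBlock m
  have hunit := hazardBlock_subset_unitInterval hm
  have h := card_pow_le_sepNum (φ := φ) (ι := Fin (2 * m - 1)) (n := n)
    (J := Subtype.val ⁻¹' hazardMiddle m) (K := fun j => Subtype.val ⁻¹' hazardCore m (j + 1))
    hε.le (fun A hA => hφ.card_le_of_isSeparated hε hA) ?_ ?_ ?_
  · rwa [Fintype.card_fin] at h
  · have hmem : hazardEndpoint m 1 ∈ hazardMiddle m :=
      left_mem_Icc.2 (hazardEndpoint_mono m (by omega))
    exact ⟨⟨_, hunit (hmid hmem)⟩, hmem⟩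
  · intro j y hy
    have hcore := hazardCore_subset_hazardMiddle (n := m) (k := j + 1) (by omega) (by omega)
    obtain ⟨x, hx, hxy⟩ := hφ.surjOn_hazardCore hm (k := j + 1) (by omega) hy
    refine ⟨⟨x, hunit (hmid (hcore hx))⟩, ⟨hcore hx, hx⟩, Subtype.ext ?_⟩
    rw [← liftReal_coe]
    exact hxy
  · intro j j' hjj' x hx y hy
    rw [Subtype.dist_eq, Real.dist_eq]
    exact hεm.trans_le (hazardCore_apart (by simpa [Fin.val_inj] using hjj') hx hy)

lemma sepExp_le_log_hazardDepth {ε : ℝ} (hε : 0 < ε) :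
    sepExp dI φ ε ≤ log (2 * hazardDepth ε + 1) :=
  sepExp_le_log (by linarith [one_div_pos.2 hε]) (by simp) (fun n => hφ.sepNum_le_mul_pow n hε)

lemma sepExp_nonneg {ε : ℝ} (hε : 0 < ε) : 0 ≤ sepExp dI φ ε :=
  _root_.sepExp_nonneg (by linarith [one_div_pos.2 hε]) (by simp)
    (fun n => hφ.sepNum_le_mul_pow n hε)

lemma eventually_log_le_sepExp {m : ℕ} (hm : 1 ≤ m) :
    ∀ᶠ ε in 𝓝[>] 0, log (2 * m - 1 : ℕ) ≤ sepExp dI φ ε := by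
  have hgap : 0 < 2 * (hazardWidth m / (2 * m + 1)) := by
    have := hazardWidth_pos m
    positivity
  filter_upwards [Ioo_mem_nhdsGT hgap] with ε hε
  exact log_le_sepExp (by linarith [one_div_pos.2 hε.1]) (by simp)
    (fun n => hφ.sepNum_le_mul_pow n hε.1) (by omega) (hφ.pow_le_sepNum hm hε.1 hε.2)

lemma tendsto_sepExp : Tendsto (sepExp dI φ) (𝓝[>] 0) atTop := by
  refine tendsto_atTop.2 fun C => ?_
  set m := ⌈exp C⌉₊ + 1
  have hm : exp C ≤ ((2 * m - 1 : ℕ) : ℝ) :=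
    (Nat.le_ceil _).trans (by exact_mod_cast (by omega : ⌈exp C⌉₊ ≤ 2 * m - 1))
  have hC : C ≤ log (2 * m - 1 : ℕ) := (le_log_iff_exp_le ((exp_pos C).trans_le hm)).2 hm
  exact (hφ.eventually_log_le_sepExp (by omega)).mono fun ε hε => hC.trans hε

lemma tendsto_sepExp_div_abs_log :
    Tendsto (fun ε => sepExp dI φ ε / |log ε|) (𝓝[>] 0) (𝓝 0) := by
  have hlog2 := log_pos one_lt_two
  have hmaj : Tendsto (fun ε => log (2 / log 2 * -log ε + 5) / -log ε) (𝓝[>] 0) (𝓝 0) :=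
    (tendsto_log_mul_add_div_atTop (by positivity) 5).comp
      (tendsto_neg_atBot_atTop.comp tendsto_log_nhdsGT_zero)
  refine tendsto_of_tendsto_of_tendsto_of_le_of_le' tendsto_const_nhds hmaj ?_ ?_
  · filter_upwards [self_mem_nhdsWithin] with ε hε
    exact div_nonneg (hφ.sepExp_nonneg hε) (abs_nonneg _)
  · filter_upwards [Ioo_mem_nhdsGT one_pos] with ε hε
    have hlogε : log ε < 0 := log_neg hε.1 hε.2
    have hdepth := hazardDepth_le hε.1 hε.2.le
    rw [abs_of_neg hlogε]
    refine div_le_div_of_nonneg_right ?_ (by linarith)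
    calc sepExp dI φ ε ≤ log (2 * hazardDepth ε + 1) := hφ.sepExp_le_log_hazardDepth hε.1
      _ ≤ log (2 * (-log ε / log 2 + 2) + 1) := by gcongr
      _ = log (2 / log 2 * -log ε + 5) := by congr 1; ring

end IsHazardMap

theorem hazardMap_entropy_infinite_mdim_zero_general (φ : unitInterval → unitInterval)
    (hmap : IsHazardMap φ) :
    Filter.Tendsto (fun ε : ℝ => sepExp dI φ ε) (nhdsWithin 0 (Set.Ioi 0))
      Filter.atTop ∧
    mdimLower dI φ = 0 ∧ mdimUpper dI φ = 0 :=
  ⟨hmap.tendsto_sepExp, hmap.tendsto_sepExp_div_abs_log.liminf_eq,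
    hmap.tendsto_sepExp_div_abs_log.limsup_eq⟩

/-- The Hazard map has infinite topological entropy (i.e. `sep(φ,ε) → ∞` as `ε → 0⁺`)
but both its lower and upper metric mean dimensions are `0`. -/
theorem hazardMap_entropy_infinite_mdim_zero (φ : unitInterval → unitInterval)
    (hφ : Continuous φ) (hmap : IsHazardMap φ) :
    Filter.Tendsto (fun ε : ℝ => sepExp dI φ ε) (nhdsWithin 0 (Set.Ioi 0))
      Filter.atTop ∧
    mdimLower dI φ = 0 ∧ mdimUpper dI φ = 0 :=
  hazardMap_entropy_infinite_mdim_zero_general φ hmap
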